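/- (Proposition 5, lower bound for the minimization case.) Let u₁, u₂ be real numbers with u₁ ≥ u₂ and set δ = u₁ − u₂. Let l_δ, u_δ, l_θ, u_θ, θ be real numbers with 0 ≤ l_δ ≤ δ ≤ u_δ and 0 < l_θ ≤ θ ≤ u_θ. Then u₁·Φ(l_δ/u_θ) + u₂·(1 − Φ(l_δ/u_θ)) + l_θ·φ(u_δ/l_θ) ≤ u₁·Φ(δ/θ) + u₂·Φ(−δ/θ) + θ·φ(δ/θ). -/

import Mathlib

open MeasureTheory ProbabilityTheory Real

/-! Using `Φ(-x) = 1 - Φ(x)`, both sides read `u₂ + δ · Φ(·) + s · φ(·)`. The left `Φ`-argument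
`lδ / uθ` is at most `δ / θ` and `Φ` is monotone; the left `φ`-argument `uδ / lθ` is at least
`δ / θ ≥ 0`, where `φ` is decreasing, and its coefficient `lθ` is at most `θ`. -/

/-- Standard normal p.d.f. -/
noncomputable def phi (w : ℝ) : ℝ := (1 / Real.sqrt (2 * Real.pi)) * Real.exp (-w ^ 2 / 2)

/-- Standard normal c.d.f. -/
noncomputable def Phi (w : ℝ) : ℝ := ∫ u in Set.Iic w, phi u

lemma phi_eq_gaussianPDFReal : phi = gaussianPDFReal 0 1 := by
  ext w
  simp [phi, gaussianPDFReal]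

lemma phi_nonneg (w : ℝ) : 0 ≤ phi w := by
  rw [phi_eq_gaussianPDFReal]
  exact gaussianPDFReal_nonneg 0 1 w

lemma phi_neg (w : ℝ) : phi (-w) = phi w := by
  simp [phi]

lemma integrable_phi : Integrable phi := by
  rw [phi_eq_gaussianPDFReal]
  exact integrable_gaussianPDFReal 0 1

lemma integral_phi : ∫ w, phi w = 1 := by
  rw [phi_eq_gaussianPDFReal]
  exact integral_gaussianPDFReal_eq_one 0 one_ne_zero

lemma phi_antitoneOn : AntitoneOn phi (Set.Ici 0) := by
  intro a ha b _ hab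
  unfold phi
  gcongr

lemma Phi_mono : Monotone Phi := fun _ _ hab =>
  setIntegral_mono_set integrable_phi.integrableOn (.of_forall phi_nonneg)
    (Set.Iic_subset_Iic.mpr hab).eventuallyLE

lemma Phi_neg (x : ℝ) : Phi (-x) = 1 - Phi x := by
  have h_tail : Phi (-x) = ∫ u in Set.Ioi x, phi u := by
    rw [Phi, ← integral_comp_neg_Ioi]
    simp only [phi_neg]
  have h_split : Phi x + ∫ u in Set.Ioi x, phi u = 1 :=
    integral_phi ▸ intervalIntegral.integral_Iic_add_Ioi integrable_phi.integrableOn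
      integrable_phi.integrableOn
  linarith

lemma mul_phi_div_le_mul_phi_div {a b s t : ℝ} (ha : 0 ≤ a) (hab : a ≤ b) (hs : 0 < s)
    (hst : s ≤ t) : s * phi (b / s) ≤ t * phi (a / t) := by
  have ht : 0 < t := hs.trans_le hst
  have h_arg_nonneg : 0 ≤ a / t := div_nonneg ha ht.le
  have h_arg : a / t ≤ b / s := div_le_div₀ (ha.trans hab) hab hs hst
  have h_phi : phi (b / s) ≤ phi (a / t) :=
    phi_antitoneOn h_arg_nonneg (h_arg_nonneg.trans h_arg) h_arg
  exact mul_le_mul hst h_phi (phi_nonneg _) ht.le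

theorem enhanced_lower_bound_general
    (u₁ u₂ lδ uδ lθ uθ θ : ℝ) (h12 : u₂ ≤ u₁)
    (hδl : lδ ≤ u₁ - u₂) (hδu : u₁ - u₂ ≤ uδ)
    (hlθ : 0 < lθ) (hθl : lθ ≤ θ) (hθu : θ ≤ uθ) :
    u₁ * Phi (lδ / uθ) + u₂ * (1 - Phi (lδ / uθ)) + lθ * phi (uδ / lθ)
      ≤ u₁ * Phi ((u₁ - u₂) / θ) + u₂ * Phi (-(u₁ - u₂) / θ) + θ * phi ((u₁ - u₂) / θ) := by
  have hθ : 0 < θ := hlθ.trans_le hθl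
  have hδ : 0 ≤ u₁ - u₂ := sub_nonneg.mpr h12
  have h_Phi : Phi (lδ / uθ) ≤ Phi ((u₁ - u₂) / θ) :=
    Phi_mono (div_le_div₀ hδ hδl hθ hθu)
  have h_phi : lθ * phi (uδ / lθ) ≤ θ * phi ((u₁ - u₂) / θ) :=
    mul_phi_div_le_mul_phi_div hδ hδu hlθ hθl
  rw [neg_div, Phi_neg]
  linarith [mul_le_mul_of_nonneg_left h_Phi hδ]

theorem enhanced_lower_bound
    (u₁ u₂ lδ uδ lθ uθ θ : ℝ) (h12 : u₂ ≤ u₁)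
    (hlδ : 0 ≤ lδ) (hδl : lδ ≤ u₁ - u₂) (hδu : u₁ - u₂ ≤ uδ)
    (hlθ : 0 < lθ) (hθl : lθ ≤ θ) (hθu : θ ≤ uθ) :
    u₁ * Phi (lδ / uθ) + u₂ * (1 - Phi (lδ / uθ)) + lθ * phi (uδ / lθ)
      ≤ u₁ * Phi ((u₁ - u₂) / θ) + u₂ * Phi (-(u₁ - u₂) / θ) + θ * phi ((u₁ - u₂) / θ) :=
  enhanced_lower_bound_general u₁ u₂ lδ uδ lθ uθ θ h12 hδl hδu hlθ hθl hθu
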